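/- arXiv:1712.08194 — 2 statements merged into one kernel-verified Lean document; each statement's English description precedes it below -/
import Mathlib

section
/- Let Λ be a k-graph with a pseudo free self-similar action of a group G. Call a subset U ⊆ Λ^∞ invariant if for all g ∈ G, μ, ν ∈ Λ with s(μ) = g·s(ν) and all x ∈ s(ν)Λ^∞, νx ∈ U implies μ(g·x) ∈ U. Then the only invariant subsets of Λ^∞ that are open in the cylinder-set topology are ∅ and Λ^∞ if and only if Λ is G-cofinal. (Equivalently: the self-similar path groupoid G_{G,Λ} is minimal if and only if Λ is G-cofinal.) -/
/-!
For a vertex `v`, the paths that pass through some vertex reachable from the `G`-orbit of `v`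
form an open invariant set, nonempty because `Λ` has no sources. If the only open invariant
sets are trivial, every path is of this kind, which is `G`-cofinality.

Conversely, a nonempty open invariant set `U` contains a cylinder `Z(α)`. Given a path `y`,
cofinality yields `μ` from `g·s(α)` to some vertex `y(p,p)`; the path `α (g⁻¹·μ) (g⁻¹·σ^p y)`
lies in `Z(α) ⊆ U`, and invariance moves it to `y(0,p) (σ^p y) = y`.
-/

namespace SSKG

/-- `ℕ^k`. -/
abbrev NK (k : ℕ) := Fin k → ℕ
/-- `ℤ^k`. -/
abbrev ZK (k : ℕ) := Fin k → ℤ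

lemma le0 {k : ℕ} (p : NK k) : 0 ≤ p := Pi.le_def.mpr fun i => Nat.zero_le (p i)

/-- A (row-finite, source-free, countable) `k`-graph: a countable small category with a
degree functor `d` into `ℕ^k` satisfying the unique factorization property. -/
structure KGraph (k : ℕ) where
  Obj : Type
  Mor : Type
  countable_mor : Countable Mor
  r : Mor → Obj
  s : Mor → Obj
  d : Mor → NK k
  ofObj : Obj → Mor
  comp : (μ ν : Mor) → s μ = r ν → Mor
  r_ofObj : ∀ v, r (ofObj v) = v
  s_ofObj : ∀ v, s (ofObj v) = v
  d_ofObj : ∀ v, d (ofObj v) = 0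
  eq_ofObj_of_d_eq_zero : ∀ μ, d μ = 0 → ∃ v, μ = ofObj v
  r_comp : ∀ μ ν h, r (comp μ ν h) = r μ
  s_comp : ∀ μ ν h, s (comp μ ν h) = s ν
  d_comp : ∀ μ ν h, d (comp μ ν h) = d μ + d ν
  comp_ofObj : ∀ μ (h : s μ = r (ofObj (s μ))), comp μ (ofObj (s μ)) h = μ
  ofObj_comp : ∀ μ (h : s (ofObj (r μ)) = r μ), comp (ofObj (r μ)) μ h = μ
  comp_assoc : ∀ μ ν ρ (h₁ : s μ = r ν) (h₂ : s ν = r ρ),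
      comp (comp μ ν h₁) ρ ((s_comp μ ν h₁).trans h₂)
        = comp μ (comp ν ρ h₂) (h₁.trans (r_comp ν ρ h₂).symm)
  factor_exists : ∀ μ (n m : NK k), d μ = n + m →
      ∃ (α β : Mor) (h : s α = r β), d α = n ∧ d β = m ∧ comp α β h = μ
  factor_unique : ∀ (α β α' β' : Mor) (h : s α = r β) (h' : s α' = r β'),
      d α = d α' → comp α β h = comp α' β' h' → α = α' ∧ β = β'
  row_finite : ∀ (v : Obj) (n : NK k), {μ : Mor | r μ = v ∧ d μ = n}.Finite
  no_sources : ∀ (v : Obj) (n : NK k), ∃ μ : Mor, r μ = v ∧ d μ = n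

lemma KGraph.comp_congr {k : ℕ} (Λ : KGraph k) {μ ν ν' : Λ.Mor} (hν : ν = ν')
    (h : Λ.s μ = Λ.r ν) (h' : Λ.s μ = Λ.r ν') : Λ.comp μ ν h = Λ.comp μ ν' h' := by
  cases hν; rfl

/-- An edge: a morphism of degree `e_i` for some `i`. -/
def IsEdge {k : ℕ} (Λ : KGraph k) (μ : Λ.Mor) : Prop := ∃ i : Fin k, Λ.d μ = Pi.single i 1

/-- Membership in `Λ⁰ ∪ Λᵉ` (a vertex or an edge). -/
def VorE {k : ℕ} (Λ : KGraph k) (μ : Λ.Mor) : Prop := Λ.d μ = 0 ∨ IsEdge Λ μ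

/-- A self-similar action of a group `G` on a `k`-graph `Λ`: an action by degree-,
range- and source-preserving automorphisms, together with a restriction map
`(g, μ) ↦ g|_μ` satisfying the Exel–Pardo style axioms. -/
structure SelfSimilar (k : ℕ) (G : Type) [Group G] (Λ : KGraph k) where
  act : G → Λ.Mor → Λ.Mor
  res : G → Λ.Mor → G
  act_one : ∀ μ, act 1 μ = μ
  act_mul : ∀ g h μ, act (g * h) μ = act g (act h μ)
  act_d : ∀ g μ, Λ.d (act g μ) = Λ.d μ
  act_ofObj_r : ∀ g μ, act g (Λ.ofObj (Λ.r μ)) = Λ.ofObj (Λ.r (act g μ))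
  act_ofObj_s : ∀ g μ, act g (Λ.ofObj (Λ.s μ)) = Λ.ofObj (Λ.s (act g μ))
  compat : ∀ g μ ν (h : Λ.s μ = Λ.r ν), Λ.s (act g μ) = Λ.r (act (res g μ) ν)
  act_comp : ∀ g μ ν (h : Λ.s μ = Λ.r ν),
      act g (Λ.comp μ ν h) = Λ.comp (act g μ) (act (res g μ) ν) (compat g μ ν h)
  res_ofObj : ∀ g v, res g (Λ.ofObj v) = g
  res_comp : ∀ g μ ν (h : Λ.s μ = Λ.r ν), res g (Λ.comp μ ν h) = res (res g μ) ν
  res_one : ∀ μ, res 1 μ = 1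
  res_mul : ∀ g h μ, res (g * h) μ = res g (act h μ) * res h μ

variable {k : ℕ} {G : Type} [Group G] {Λ : KGraph k}

/-- The induced action of `G` on the vertices `Λ⁰`. -/
def SelfSimilar.actV (S : SelfSimilar k G Λ) (g : G) (v : Λ.Obj) : Λ.Obj :=
  Λ.s (S.act g (Λ.ofObj v))

/-- The action is pseudo free. -/
def SelfSimilar.PseudoFree (S : SelfSimilar k G Λ) : Prop :=
  ∀ (g : G) (μ : Λ.Mor), S.act g μ = μ → S.res g μ = 1 → g = 1

/-- An infinite path in `Λ`: a degree-preserving functor `Ω_k → Λ`, recorded through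
its segments `x(p,q)` for `p ≤ q`. -/
structure InfPath {k : ℕ} (Λ : KGraph k) where
  seg : ∀ p q : NK k, p ≤ q → Λ.Mor
  d_seg : ∀ p q (h : p ≤ q), Λ.d (seg p q h) = fun i => q i - p i
  src_seg : ∀ p q m (h₁ : p ≤ q) (h₂ : q ≤ m), Λ.s (seg p q h₁) = Λ.r (seg q m h₂)
  comp_seg : ∀ p q m (h₁ : p ≤ q) (h₂ : q ≤ m),
      Λ.comp (seg p q h₁) (seg q m h₂) (src_seg p q m h₁ h₂) = seg p m (h₁.trans h₂)

lemma InfPath.ext' {x y : InfPath Λ} (h : x.seg = y.seg) : x = y := by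
  cases x; cases y; cases h; rfl

/-- The shift `σ^p(x)`. -/
def InfPath.shift (x : InfPath Λ) (p : NK k) : InfPath Λ where
  seg m n h := x.seg (m + p) (n + p) (add_le_add_left h p)
  d_seg m n h := by
    rw [x.d_seg]; funext i; simp only [Pi.add_apply]; omega
  src_seg m n l h₁ h₂ := x.src_seg _ _ _ _ _
  comp_seg m n l h₁ h₂ := x.comp_seg _ _ _ _ _

/-- The action of `G` on infinite paths: `(g·x)(p,q) = g|_{x(0,p)} · x(p,q)`. -/
def SelfSimilar.actInf (S : SelfSimilar k G Λ) (g : G) (x : InfPath Λ) : InfPath Λ where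
  seg p q h := S.act (S.res g (x.seg 0 p (le0 p))) (x.seg p q h)
  d_seg p q h := by rw [S.act_d, x.d_seg]
  src_seg p q m h₁ h₂ := by
    have key : S.res g (x.seg 0 q (le0 q))
        = S.res (S.res g (x.seg 0 p (le0 p))) (x.seg p q h₁) := by
      rw [← S.res_comp g (x.seg 0 p (le0 p)) (x.seg p q h₁) (x.src_seg 0 p q (le0 p) h₁),
        x.comp_seg 0 p q (le0 p) h₁]
    beta_reduce
    rw [key]
    exact S.compat _ _ _ (x.src_seg p q m h₁ h₂)
  comp_seg p q m h₁ h₂ := by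
    have key : S.res g (x.seg 0 q (le0 q))
        = S.res (S.res g (x.seg 0 p (le0 p))) (x.seg p q h₁) := by
      rw [← S.res_comp g (x.seg 0 p (le0 p)) (x.seg p q h₁) (x.src_seg 0 p q (le0 p) h₁),
        x.comp_seg 0 p q (le0 p) h₁]
    beta_reduce
    rw [← x.comp_seg p q m h₁ h₂, S.act_comp]
    exact Λ.comp_congr (by rw [key]) _ _

/-- The restriction cocycle `g|_x : ℕ^k → G`, `g|_x(p) = g|_{x(0,p)}`. -/
def SelfSimilar.resInf (S : SelfSimilar k G Λ) (g : G) (x : InfPath Λ) : NK k → G :=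
  fun p => S.res g (x.seg 0 p (le0 p))

/-- `IsConcat μ x y` says that `y = μx`, the concatenation of the finite path `μ`
(with `x(0,0) = s(μ)`) and the infinite path `x`. -/
def IsConcat (Λ : KGraph k) (μ : Λ.Mor) (x y : InfPath Λ) : Prop :=
  x.seg 0 0 le_rfl = Λ.ofObj (Λ.s μ) ∧
  y.seg 0 (Λ.d μ) (le0 _) = μ ∧
  ∀ m n (h : m ≤ n), y.seg (Λ.d μ + m) (Λ.d μ + n) (add_le_add_right h _) = x.seg m n h

/-- The cylinder set `Z(μ)`. -/
def cylinder (Λ : KGraph k) (μ : Λ.Mor) : Set (InfPath Λ) :=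
  {x : InfPath Λ | x.seg 0 (Λ.d μ) (le0 _) = μ}

/-- The cylinder-set topology on `Λ^∞`. -/
instance instTopInfPath (Λ : KGraph k) : TopologicalSpace (InfPath Λ) :=
  TopologicalSpace.generateFrom {U | ∃ μ : Λ.Mor, U = cylinder Λ μ}

/-- `Λ` is `G`-cofinal. -/
def GCofinal (S : SelfSimilar k G Λ) : Prop :=
  ∀ (x : InfPath Λ) (v : Λ.Obj), ∃ (p : NK k) (μ : Λ.Mor) (g : G),
    Λ.ofObj (Λ.s μ) = x.seg p p le_rfl ∧ Λ.r μ = S.actV g v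

/-- `Λ` is `G`-aperiodic. -/
def GAperiodic (S : SelfSimilar k G Λ) : Prop :=
  ∀ v : Λ.Obj, ∃ x : InfPath Λ, x.seg 0 0 le_rfl = Λ.ofObj v ∧
    ∀ (g : G) (p q : NK k), g ≠ 1 ∨ p ≠ q → x.shift p ≠ S.actInf g (x.shift q)

/-- A subset `U ⊆ Λ^∞` is invariant for the self-similar action. -/
def InvariantSet (S : SelfSimilar k G Λ) (U : Set (InfPath Λ)) : Prop :=
  ∀ (g : G) (μ ν : Λ.Mor) (x z y : InfPath Λ),
    Λ.s μ = S.actV g (Λ.s ν) → IsConcat Λ ν x z → IsConcat Λ μ (S.actInf g x) y →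
    z ∈ U → y ∈ U

/-- The minimal common extensions `Λ^min(μ,ν)`. -/
def Lmin (Λ : KGraph k) (μ ν : Λ.Mor) : Set (Λ.Mor × Λ.Mor) :=
  {p | ∃ (h₁ : Λ.s μ = Λ.r p.1) (h₂ : Λ.s ν = Λ.r p.2),
      Λ.comp μ p.1 h₁ = Λ.comp ν p.2 h₂ ∧ Λ.d (Λ.comp μ p.1 h₁) = Λ.d μ ⊔ Λ.d ν}

/-- The group `C(ℕ^k, G)` of all functions `ℕ^k → G` under pointwise multiplication. -/
abbrev CkG (k : ℕ) (G : Type) [Group G] := NK k → G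

/-- The normal subgroup of eventually trivial functions. -/
def tailTrivial (k : ℕ) (G : Type) [Group G] : Subgroup (CkG k G) where
  carrier := {f | ∃ z : NK k, ∀ p, z ≤ p → f p = 1}
  one_mem' := ⟨0, fun _ _ => rfl⟩
  mul_mem' := by
    rintro f g ⟨z₁, h₁⟩ ⟨z₂, h₂⟩
    exact ⟨z₁ ⊔ z₂, fun p hp => by
      rw [Pi.mul_apply, h₁ p (le_trans le_sup_left hp), h₂ p (le_trans le_sup_right hp),
        one_mul]⟩
  inv_mem' := by
    rintro f ⟨z, h⟩
    exact ⟨z, fun p hp => by rw [Pi.inv_apply, h p hp, inv_one]⟩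

instance tailTrivialNormal (k : ℕ) (G : Type) [Group G] : (tailTrivial k G).Normal := by
  constructor
  rintro f ⟨z, hz⟩ g
  exact ⟨z, fun p hp => by
    simp only [Pi.mul_apply, Pi.inv_apply, hz p hp, mul_one, mul_inv_cancel]⟩

/-- The quotient group `Q(ℕ^k, G) = C(ℕ^k,G)/∼`. -/
abbrev QkG (k : ℕ) (G : Type) [Group G] := CkG k G ⧸ tailTrivial k G

/-- Coercion `ℕ^k → ℤ^k`. -/
def toZ {k : ℕ} (p : NK k) : ZK k := fun i => (p i : ℤ)

open scoped Classical in
/-- The translation `T_z` on functions `ℕ^k → G`, for `z ∈ ℤ^k`. -/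
noncomputable def transFun {k : ℕ} {G : Type} [Group G] (z : ZK k) (f : CkG k G) : CkG k G :=
  fun p => if (∀ i, z i ≤ (p i : ℤ)) then f (fun i => ((p i : ℤ) - z i).toNat) else 1

/-- The ambient space `Λ^∞ × (Q(ℕ^k,G) ⋊ ℤ^k) × Λ^∞` containing the self-similar
path groupoid (as a set). -/
abbrev Triple (k : ℕ) (G : Type) [Group G] (Λ : KGraph k) :=
  InfPath Λ × (QkG k G × ZK k) × InfPath Λ

/-- The basic set `Z(μ, g, ν)` of the self-similar path groupoid. -/
def Zset (S : SelfSimilar k G Λ) (μ : Λ.Mor) (g : G) (ν : Λ.Mor) : Set (Triple k G Λ) :=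
  {t | ∃ x y z : InfPath Λ, IsConcat Λ ν x z ∧ IsConcat Λ μ (S.actInf g x) y ∧
    t = (y, ((QuotientGroup.mk (transFun (toZ (Λ.d μ)) (S.resInf g x)) : QkG k G),
      toZ (Λ.d μ) - toZ (Λ.d ν)), z)}

/-- The family `B_{G,Λ}` of basic sets. -/
def BGL (S : SelfSimilar k G Λ) : Set (Set (Triple k G Λ)) :=
  {A | ∃ (μ ν : Λ.Mor) (g : G), Λ.s μ = S.actV g (Λ.s ν) ∧ A = Zset S μ g ν}

/-- The self-similar path groupoid `G_{G,Λ}` (as a set of triples). -/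
def Gpd (S : SelfSimilar k G Λ) : Set (Triple k G Λ) :=
  {t | ∃ (g : G) (μ ν : Λ.Mor), Λ.s μ = S.actV g (Λ.s ν) ∧ t ∈ Zset S μ g ν}

/-- The topology on `G_{G,Λ}` generated by the basic sets. -/
def gpdTop (S : SelfSimilar k G Λ) : TopologicalSpace {t : Triple k G Λ // t ∈ Gpd S} :=
  TopologicalSpace.generateFrom
    {A | ∃ (μ ν : Λ.Mor) (g : G), A = {t | (t : Triple k G Λ) ∈ Zset S μ g ν}}

namespace KGraph

lemma ofObj_injective : Function.Injective Λ.ofObj := fun v w h => by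
  simpa only [Λ.r_ofObj] using congrArg Λ.r h

lemma comp_congr_left {μ μ' ν : Λ.Mor} (hμ : μ = μ') (h : Λ.s μ = Λ.r ν)
    (h' : Λ.s μ' = Λ.r ν) : Λ.comp μ ν h = Λ.comp μ' ν h' := by
  cases hμ; rfl

lemma comp_left_cancel {α β β' : Λ.Mor} {h : Λ.s α = Λ.r β} {h' : Λ.s α = Λ.r β'}
    (e : Λ.comp α β h = Λ.comp α β' h') : β = β' :=
  (Λ.factor_unique α β α β' h h' rfl e).2

lemma comp_of_d_eq_zero {α β : Λ.Mor} (h : Λ.s α = Λ.r β) (hα : Λ.d α = 0) :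
    Λ.comp α β h = β := by
  obtain ⟨v, rfl⟩ := Λ.eq_ofObj_of_d_eq_zero α hα
  obtain rfl : v = Λ.r β := (Λ.s_ofObj v).symm.trans h
  exact Λ.ofObj_comp β _

lemma eq_ofObj_s_of_d_eq_zero {μ : Λ.Mor} (h : Λ.d μ = 0) : μ = Λ.ofObj (Λ.s μ) := by
  obtain ⟨v, rfl⟩ := Λ.eq_ofObj_of_d_eq_zero μ h
  rw [Λ.s_ofObj]

def IsPrefix (Λ : KGraph k) (α μ : Λ.Mor) : Prop :=
  ∃ (β : Λ.Mor) (h : Λ.s α = Λ.r β), Λ.comp α β h = μ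

lemma isPrefix_comp (α β : Λ.Mor) (h : Λ.s α = Λ.r β) : Λ.IsPrefix α (Λ.comp α β h) :=
  ⟨β, h, rfl⟩

lemma isPrefix_refl (μ : Λ.Mor) : Λ.IsPrefix μ μ :=
  ⟨Λ.ofObj (Λ.s μ), (Λ.r_ofObj _).symm, Λ.comp_ofObj μ _⟩

lemma IsPrefix.d_le {α μ : Λ.Mor} (h : Λ.IsPrefix α μ) : Λ.d α ≤ Λ.d μ := by
  obtain ⟨β, hβ, rfl⟩ := h
  rw [Λ.d_comp]
  exact le_self_add

lemma IsPrefix.trans {α β γ : Λ.Mor} (h₁ : Λ.IsPrefix α β) (h₂ : Λ.IsPrefix β γ) :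
    Λ.IsPrefix α γ := by
  obtain ⟨β₁, h₁, rfl⟩ := h₁
  obtain ⟨β₂, h₂, rfl⟩ := h₂
  have h₂' : Λ.s β₁ = Λ.r β₂ := (Λ.s_comp α β₁ h₁).symm.trans h₂
  exact ⟨_, _, (Λ.comp_assoc α β₁ β₂ h₁ h₂').symm⟩

lemma IsPrefix.eq_of_d_eq {α α' μ : Λ.Mor} (h : Λ.IsPrefix α μ) (h' : Λ.IsPrefix α' μ)
    (hd : Λ.d α = Λ.d α') : α = α' := by
  obtain ⟨β, hβ, rfl⟩ := h
  obtain ⟨β', hβ', e⟩ := h'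
  exact (Λ.factor_unique α β α' β' hβ hβ' hd e.symm).1

lemma exists_isPrefix (μ : Λ.Mor) {p : NK k} (hp : p ≤ Λ.d μ) :
    ∃ α, Λ.d α = p ∧ Λ.IsPrefix α μ := by
  obtain ⟨α, β, h, hα, -, e⟩ :=
    Λ.factor_exists μ p (Λ.d μ - p) (add_tsub_cancel_of_le hp).symm
  exact ⟨α, hα, β, h, e⟩

lemma IsPrefix.of_d_le {α α' μ : Λ.Mor} (h : Λ.IsPrefix α μ) (h' : Λ.IsPrefix α' μ)
    (hd : Λ.d α ≤ Λ.d α') : Λ.IsPrefix α α' := by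
  obtain ⟨α'', hd'', h''⟩ := Λ.exists_isPrefix α' hd
  rwa [h.eq_of_d_eq (h''.trans h') hd''.symm]

lemma IsPrefix.comp_left {β γ : Λ.Mor} (h : Λ.IsPrefix β γ) (μ : Λ.Mor)
    (hβ : Λ.s μ = Λ.r β) (hγ : Λ.s μ = Λ.r γ) :
    Λ.IsPrefix (Λ.comp μ β hβ) (Λ.comp μ γ hγ) := by
  obtain ⟨δ, hδ, rfl⟩ := h
  exact ⟨δ, (Λ.s_comp μ β hβ).trans hδ, Λ.comp_assoc μ β δ hβ hδ⟩

end KGraph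

namespace InfPath

lemma seg_congr (x : InfPath Λ) {p p' q q' : NK k} (hp : p = p') (hq : q = q')
    (h : p ≤ q) (h' : p' ≤ q') : x.seg p q h = x.seg p' q' h' := by
  cases hp; cases hq; rfl

lemma d_seg_zero (x : InfPath Λ) (p : NK k) : Λ.d (x.seg 0 p (le0 p)) = p := by
  rw [x.d_seg]; funext i; simp

lemma seg_self_eq_ofObj_r (x : InfPath Λ) {p q : NK k} (h : p ≤ p) (hq : p ≤ q) :
    x.seg p p h = Λ.ofObj (Λ.r (x.seg p q hq)) := by
  rw [← x.src_seg p p q h hq]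
  exact Λ.eq_ofObj_s_of_d_eq_zero (by rw [x.d_seg]; funext i; simp)

lemma seg_self_eq_ofObj_s (x : InfPath Λ) {p q : NK k} (h : p ≤ p) (hq : q ≤ p) :
    x.seg p p h = Λ.ofObj (Λ.s (x.seg q p hq)) := by
  rw [x.src_seg q p p hq h]
  exact x.seg_self_eq_ofObj_r h h

lemma isPrefix_seg (x : InfPath Λ) {p q : NK k} (h : p ≤ q) :
    Λ.IsPrefix (x.seg 0 p (le0 p)) (x.seg 0 q (le0 q)) :=
  ⟨_, x.src_seg 0 p q _ h, x.comp_seg 0 p q _ h⟩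

lemma seg_zero_eq_of_isPrefix (x : InfPath Λ) {α : Λ.Mor} {p q : NK k}
    (h : Λ.IsPrefix α (x.seg 0 q (le0 q))) (hα : Λ.d α = p) : x.seg 0 p (le0 p) = α := by
  have hpq : p ≤ q := by simpa only [hα, d_seg_zero] using h.d_le
  exact (x.isPrefix_seg hpq).eq_of_d_eq h (by rw [d_seg_zero, hα])

lemma seg_zero_eq_of_le {x y : InfPath Λ} {p q : NK k} (hpq : p ≤ q)
    (h : x.seg 0 q (le0 q) = y.seg 0 q (le0 q)) : x.seg 0 p (le0 p) = y.seg 0 p (le0 p) :=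
  x.seg_zero_eq_of_isPrefix (h ▸ y.isPrefix_seg hpq) (y.d_seg_zero p)

noncomputable def ofPrefixes (A : NK k → Λ.Mor) (hd : ∀ q, Λ.d (A q) = q)
    (hA : ∀ p q, p ≤ q → Λ.IsPrefix (A p) (A q)) : InfPath Λ where
  seg p q h := (hA p q h).choose
  d_seg p q h := by
    obtain ⟨hh, e⟩ := (hA p q h).choose_spec
    have hdc := Λ.d_comp _ _ hh
    rw [e, hd, hd] at hdc
    funext i
    have := congrFun hdc i
    have := h i
    simp only [Pi.add_apply] at *
    omega
  src_seg p q m h₁ h₂ := by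
    obtain ⟨hh₁, e₁⟩ := (hA p q h₁).choose_spec
    obtain ⟨hh₂, -⟩ := (hA q m h₂).choose_spec
    exact ((Λ.s_comp _ _ hh₁).symm.trans (congrArg Λ.s e₁)).trans hh₂
  comp_seg p q m h₁ h₂ := by
    obtain ⟨hh₁, e₁⟩ := (hA p q h₁).choose_spec
    obtain ⟨hh₂, e₂⟩ := (hA q m h₂).choose_spec
    obtain ⟨hh₃, e₃⟩ := (hA p m (h₁.trans h₂)).choose_spec
    have hs : Λ.s (hA p q h₁).choose = Λ.r (hA q m h₂).choose :=
      ((Λ.s_comp _ _ hh₁).symm.trans (congrArg Λ.s e₁)).trans hh₂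
    exact Λ.comp_left_cancel ((Λ.comp_assoc _ _ _ hh₁ hs).symm.trans
      ((Λ.comp_congr_left e₁ _ hh₂).trans (e₂.trans e₃.symm)))

lemma ofPrefixes_seg_zero (A : NK k → Λ.Mor) (hd : ∀ q, Λ.d (A q) = q)
    (hA : ∀ p q, p ≤ q → Λ.IsPrefix (A p) (A q)) (q : NK k) (h : 0 ≤ q) :
    (ofPrefixes A hd hA).seg 0 q h = A q := by
  obtain ⟨hh, e⟩ := (hA 0 q h).choose_spec
  rwa [Λ.comp_of_d_eq_zero hh (hd 0)] at e

lemma le_const_sup (q : NK k) : q ≤ fun _ => Finset.univ.sup q :=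
  fun i => Finset.le_sup (Finset.mem_univ i)

lemma le_d_apply_sup {F : ℕ → Λ.Mor} (hd : ∀ n, (fun _ => n) ≤ Λ.d (F n)) (q : NK k) :
    q ≤ Λ.d (F (Finset.univ.sup q)) :=
  (le_const_sup q).trans (hd _)

noncomputable def chainPrefix (F : ℕ → Λ.Mor) (hd : ∀ n, (fun _ => n) ≤ Λ.d (F n))
    (q : NK k) : Λ.Mor :=
  (Λ.exists_isPrefix _ (le_d_apply_sup hd q)).choose

lemma d_chainPrefix (F : ℕ → Λ.Mor) (hd : ∀ n, (fun _ => n) ≤ Λ.d (F n)) (q : NK k) :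
    Λ.d (chainPrefix F hd q) = q :=
  (Λ.exists_isPrefix _ (le_d_apply_sup hd q)).choose_spec.1

lemma isPrefix_chainPrefix {F : ℕ → Λ.Mor} (hF : ∀ ⦃n m⦄, n ≤ m → Λ.IsPrefix (F n) (F m))
    (hd : ∀ n, (fun _ => n) ≤ Λ.d (F n)) {q : NK k} {n : ℕ} (hq : q ≤ Λ.d (F n)) :
    Λ.IsPrefix (chainPrefix F hd q) (F n) := by
  have hpre : Λ.IsPrefix (chainPrefix F hd q) (F (Finset.univ.sup q)) :=
    (Λ.exists_isPrefix _ (le_d_apply_sup hd q)).choose_spec.2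
  rcases le_total (Finset.univ.sup q) n with h | h
  · exact hpre.trans (hF h)
  · obtain ⟨α, hα, hαF⟩ := Λ.exists_isPrefix (F n) hq
    rwa [hpre.eq_of_d_eq (hαF.trans (hF h)) ((d_chainPrefix F hd q).trans hα.symm)]

noncomputable def ofChain (F : ℕ → Λ.Mor) (hF : ∀ ⦃n m⦄, n ≤ m → Λ.IsPrefix (F n) (F m))
    (hd : ∀ n, (fun _ => n) ≤ Λ.d (F n)) : InfPath Λ :=
  ofPrefixes (chainPrefix F hd) (d_chainPrefix F hd) fun p q hpq =>
    have hq := le_d_apply_sup hd q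
    (isPrefix_chainPrefix hF hd (hpq.trans hq)).of_d_le (isPrefix_chainPrefix hF hd hq)
      (by rwa [d_chainPrefix, d_chainPrefix])

lemma ofChain_seg_zero {F : ℕ → Λ.Mor} (hF : ∀ ⦃n m⦄, n ≤ m → Λ.IsPrefix (F n) (F m))
    (hd : ∀ n, (fun _ => n) ≤ Λ.d (F n)) {α : Λ.Mor} {n : ℕ} (hα : Λ.IsPrefix α (F n))
    {q : NK k} (hq : Λ.d α = q) : (ofChain F hF hd).seg 0 q (le0 q) = α := by
  rw [ofChain, ofPrefixes_seg_zero]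
  subst hq
  exact (isPrefix_chainPrefix hF hd hα.d_le).eq_of_d_eq hα (d_chainPrefix F hd _)

end InfPath

noncomputable def KGraph.diagonalChain (Λ : KGraph k) (v : Λ.Obj) : ℕ → Λ.Mor
  | 0 => Λ.ofObj v
  | n + 1 =>
    Λ.comp (Λ.diagonalChain v n) (Λ.no_sources (Λ.s (Λ.diagonalChain v n)) 1).choose
      (Λ.no_sources _ _).choose_spec.1.symm

lemma KGraph.d_diagonalChain (Λ : KGraph k) (v : Λ.Obj) (n : ℕ) :
    Λ.d (Λ.diagonalChain v n) = fun _ => n := by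
  induction n with
  | zero => exact Λ.d_ofObj v
  | succ n ih =>
    rw [diagonalChain, Λ.d_comp, ih, (Λ.no_sources _ _).choose_spec.2]
    funext i
    simp

lemma KGraph.diagonalChain_isPrefix (Λ : KGraph k) (v : Λ.Obj) ⦃n m : ℕ⦄ (h : n ≤ m) :
    Λ.IsPrefix (Λ.diagonalChain v n) (Λ.diagonalChain v m) := by
  induction m, h using Nat.le_induction with
  | base => exact Λ.isPrefix_refl _
  | succ m _ ih => exact ih.trans (Λ.isPrefix_comp _ _ _)

namespace InfPath

lemma exists_seg_zero_eq_ofObj (Λ : KGraph k) (v : Λ.Obj) :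
    ∃ x : InfPath Λ, x.seg 0 0 le_rfl = Λ.ofObj v :=
  ⟨ofChain _ (Λ.diagonalChain_isPrefix v) (fun n => (Λ.d_diagonalChain v n).ge),
    ofChain_seg_zero _ _ (Λ.isPrefix_refl (Λ.diagonalChain v 0)) (Λ.d_ofObj v)⟩

lemma r_seg_zero (x : InfPath Λ) (q : NK k) :
    Λ.r (x.seg 0 q (le0 q)) = Λ.s (x.seg 0 0 le_rfl) :=
  (x.src_seg 0 0 q le_rfl (le0 q)).symm

lemma seg_add_eq_of_seg_zero_add_eq {x y : InfPath Λ} {μ : Λ.Mor}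
    (hμx : ∀ m, Λ.s μ = Λ.r (x.seg 0 m (le0 m)))
    (h : ∀ m, y.seg 0 (Λ.d μ + m) (le0 _) = Λ.comp μ (x.seg 0 m (le0 m)) (hμx m))
    (m n : NK k) (hmn : m ≤ n) :
    y.seg (Λ.d μ + m) (Λ.d μ + n) (add_le_add_right hmn _) = x.seg m n hmn := by
  have hY : Λ.s (Λ.comp μ (x.seg 0 m (le0 m)) (hμx m))
      = Λ.r (y.seg (Λ.d μ + m) (Λ.d μ + n) (add_le_add_right hmn _)) := by
    rw [← h m]; exact y.src_seg _ _ _ _ _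
  have hY' : Λ.s (x.seg 0 m (le0 m))
      = Λ.r (y.seg (Λ.d μ + m) (Λ.d μ + n) (add_le_add_right hmn _)) := by
    rwa [Λ.s_comp] at hY
  have hx := x.src_seg 0 m n (le0 m) hmn
  -- `μ x(0,m) y(dμ+m,dμ+n) = y(0,dμ+n) = μ x(0,n) = μ x(0,m) x(m,n)`; cancel `μ`, then `x(0,m)`.
  refine Λ.comp_left_cancel (Λ.comp_left_cancel (h := (hμx m).trans (Λ.r_comp _ _ hY').symm)
    (h' := (hμx m).trans (Λ.r_comp _ _ hx).symm) ?_)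
  calc _ = Λ.comp (Λ.comp μ (x.seg 0 m (le0 m)) (hμx m)) _ hY :=
        (Λ.comp_assoc _ _ _ _ _).symm
    _ = Λ.comp (y.seg 0 (Λ.d μ + m) (le0 _)) _ (y.src_seg _ _ _ _ _) :=
        Λ.comp_congr_left (h m).symm _ _
    _ = Λ.comp μ (x.seg 0 n (le0 n)) (hμx n) := (y.comp_seg _ _ _ _ _).trans (h n)
    _ = _ := Λ.comp_congr (x.comp_seg 0 m n _ hmn).symm _ _

lemma exists_isConcat {μ : Λ.Mor} {x : InfPath Λ} (hx : x.seg 0 0 le_rfl = Λ.ofObj (Λ.s μ)) :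
    ∃ y, IsConcat Λ μ x y := by
  have hμx : ∀ m, Λ.s μ = Λ.r (x.seg 0 m (le0 m)) := fun m => by
    rw [r_seg_zero, hx, Λ.s_ofObj]
  let F : ℕ → Λ.Mor := fun n => Λ.comp μ (x.seg 0 (fun _ => n) (le0 _)) (hμx _)
  have hF : ∀ ⦃n m⦄, n ≤ m → Λ.IsPrefix (F n) (F m) := fun n m h =>
    (x.isPrefix_seg fun _ => h).comp_left μ _ _
  have hd : ∀ n, (fun _ => n) ≤ Λ.d (F n) := fun n => by
    rw [Λ.d_comp, d_seg_zero]; exact le_add_self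
  have hseg : ∀ m, (ofChain F hF hd).seg 0 (Λ.d μ + m) (le0 _)
      = Λ.comp μ (x.seg 0 m (le0 m)) (hμx m) := fun m =>
    ofChain_seg_zero hF hd (n := Finset.univ.sup m)
      ((x.isPrefix_seg (le_const_sup m)).comp_left μ _ _) (by rw [Λ.d_comp, d_seg_zero])
  refine ⟨ofChain F hF hd, hx, ?_, seg_add_eq_of_seg_zero_add_eq hμx hseg⟩
  exact ofChain_seg_zero hF hd (n := 0) (Λ.isPrefix_comp _ _ _) rfl

lemma isConcat_shift (y : InfPath Λ) (p : NK k) :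
    IsConcat Λ (y.seg 0 p (le0 p)) (y.shift p) y := by
  have hd := y.d_seg_zero p
  refine ⟨?_, y.seg_congr rfl hd _ _, fun m n h => y.seg_congr ?_ ?_ _ _⟩
  · exact (y.seg_congr (zero_add p) (zero_add p) _ le_rfl).trans (y.seg_self_eq_ofObj_s _ _)
  all_goals rw [hd, add_comm]

end InfPath

namespace SelfSimilar

variable (S : SelfSimilar k G Λ)

lemma s_act (g : G) (μ : Λ.Mor) : Λ.s (S.act g μ) = S.actV g (Λ.s μ) := by
  rw [actV, S.act_ofObj_s, Λ.s_ofObj]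

lemma r_act (g : G) (μ : Λ.Mor) : Λ.r (S.act g μ) = S.actV g (Λ.r μ) := by
  rw [actV, S.act_ofObj_r, Λ.s_ofObj]

lemma actV_one (v : Λ.Obj) : S.actV 1 v = v := by
  rw [actV, S.act_one, Λ.s_ofObj]

lemma actV_mul (g h : G) (v : Λ.Obj) : S.actV (g * h) v = S.actV g (S.actV h v) := by
  rw [actV, S.act_mul, s_act]
  rfl

lemma actInf_seg_zero (g : G) (x : InfPath Λ) (q : NK k) :
    (S.actInf g x).seg 0 q (le0 q) = S.act g (x.seg 0 q (le0 q)) := by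
  change S.act (S.res g (x.seg 0 0 (le0 0))) _ = _
  rw [x.seg_self_eq_ofObj_r _ le_rfl, S.res_ofObj]

lemma actInf_one (x : InfPath Λ) : S.actInf 1 x = x :=
  InfPath.ext' <| funext₃ fun p q h => by
    change S.act (S.res 1 _) _ = _
    rw [S.res_one, S.act_one]

lemma actInf_mul (g h : G) (x : InfPath Λ) :
    S.actInf (g * h) x = S.actInf g (S.actInf h x) :=
  InfPath.ext' <| funext₃ fun p q hpq => by
    change S.act (S.res (g * h) _) _ = S.act (S.res g ((S.actInf h x).seg 0 p (le0 p))) _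
    rw [actInf_seg_zero, S.res_mul, S.act_mul]
    rfl

lemma actInf_actInf_inv (g : G) (x : InfPath Λ) : S.actInf g (S.actInf g⁻¹ x) = x := by
  rw [← actInf_mul, mul_inv_cancel, actInf_one]

end SelfSimilar

lemma isOpen_iff_forall_seg_zero_eq_imp_mem {U : Set (InfPath Λ)} :
    IsOpen U ↔ ∀ z ∈ U, ∃ n : NK k, ∀ y : InfPath Λ,
      y.seg 0 n (le0 n) = z.seg 0 n (le0 n) → y ∈ U := by
  refine ⟨fun hU => ?_, fun hU => isOpen_iff_forall_mem_open.2 fun z hz => ?_⟩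
  · induction hU with
    | basic V hV =>
      obtain ⟨μ, rfl⟩ := hV
      exact fun z hz => ⟨Λ.d μ, fun y hy => hy.trans hz⟩
    | univ => exact fun _ _ => ⟨0, fun _ _ => trivial⟩
    | inter U V _ _ ihU ihV =>
      rintro z ⟨hzU, hzV⟩
      obtain ⟨n₁, h₁⟩ := ihU z hzU
      obtain ⟨n₂, h₂⟩ := ihV z hzV
      exact ⟨n₁ ⊔ n₂, fun y hy => ⟨h₁ y (InfPath.seg_zero_eq_of_le le_sup_left hy),
        h₂ y (InfPath.seg_zero_eq_of_le le_sup_right hy)⟩⟩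
    | sUnion S _ ih =>
      rintro z ⟨V, hVS, hzV⟩
      obtain ⟨n, hn⟩ := ih V hVS z hzV
      exact ⟨n, fun y hy => ⟨V, hVS, hn y hy⟩⟩
  · obtain ⟨n, hn⟩ := hU z hz
    have hmem : ∀ y, y ∈ cylinder Λ (z.seg 0 n (le0 n)) ↔
        y.seg 0 n (le0 n) = z.seg 0 n (le0 n) :=
      fun y => iff_of_eq (congrArg (· = _) (y.seg_congr rfl (z.d_seg_zero n) _ _))
    exact ⟨cylinder Λ _, fun y hy => hn y ((hmem y).1 hy),
      TopologicalSpace.GenerateOpen.basic _ ⟨_, rfl⟩, (hmem z).2 rfl⟩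

def cofinalPaths (S : SelfSimilar k G Λ) (v : Λ.Obj) : Set (InfPath Λ) :=
  {x | ∃ (p : NK k) (μ : Λ.Mor) (g : G),
    Λ.ofObj (Λ.s μ) = x.seg p p le_rfl ∧ Λ.r μ = S.actV g v}

section CofinalPaths

variable (S : SelfSimilar k G Λ) (v : Λ.Obj)

lemma isOpen_cofinalPaths : IsOpen (cofinalPaths S v) := by
  refine isOpen_iff_forall_seg_zero_eq_imp_mem.2 fun z ⟨p, μ, g, hs, hr⟩ => ⟨p, fun y hy => ?_⟩
  refine ⟨p, μ, g, ?_, hr⟩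
  rw [hs, z.seg_self_eq_ofObj_s _ (le0 p), y.seg_self_eq_ofObj_s _ (le0 p), hy]

lemma mem_cofinalPaths_of_tail_mem {μ : Λ.Mor} {x y : InfPath Λ} (hy : IsConcat Λ μ x y)
    (hx : x ∈ cofinalPaths S v) : y ∈ cofinalPaths S v := by
  obtain ⟨p, μ₀, g₀, hs, hr⟩ := hx
  exact ⟨Λ.d μ + p, μ₀, g₀, hs.trans (hy.2.2 p p le_rfl).symm, hr⟩

lemma tail_mem_cofinalPaths {ν : Λ.Mor} {x z : InfPath Λ} (hz : IsConcat Λ ν x z)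
    (hzS : z ∈ cofinalPaths S v) : x ∈ cofinalPaths S v := by
  obtain ⟨p, μ₀, g₀, hs, hr⟩ := hzS
  have hpq : p ≤ Λ.d ν + p := le_add_self
  have hμ₀ : Λ.s μ₀ = Λ.r (z.seg p (Λ.d ν + p) hpq) :=
    Λ.ofObj_injective (hs.trans (z.seg_self_eq_ofObj_r _ hpq))
  refine ⟨p, Λ.comp μ₀ _ hμ₀, g₀, ?_, (Λ.r_comp _ _ _).trans hr⟩
  rw [Λ.s_comp, ← hz.2.2 p p le_rfl, z.seg_self_eq_ofObj_s _ hpq]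

lemma actInf_mem_cofinalPaths {x : InfPath Λ} (g : G) (hx : x ∈ cofinalPaths S v) :
    S.actInf g x ∈ cofinalPaths S v := by
  obtain ⟨p, μ₀, g₀, hs, hr⟩ := hx
  set h := S.res g (x.seg 0 p (le0 p))
  refine ⟨p, S.act h μ₀, h * g₀, ?_, ?_⟩
  · rw [← S.act_ofObj_s, hs]; rfl
  · rw [S.r_act, hr, S.actV_mul]

lemma invariantSet_cofinalPaths : InvariantSet S (cofinalPaths S v) :=
  fun g _ _ _ _ _ _ hz hy hzS =>
    mem_cofinalPaths_of_tail_mem S v hy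
      (actInf_mem_cofinalPaths S v g (tail_mem_cofinalPaths S v hz hzS))

lemma cofinalPaths_nonempty : (cofinalPaths S v).Nonempty := by
  obtain ⟨x, hx⟩ := InfPath.exists_seg_zero_eq_ofObj Λ v
  exact ⟨x, 0, Λ.ofObj v, 1, by rw [Λ.s_ofObj, hx], by rw [Λ.r_ofObj, S.actV_one]⟩

end CofinalPaths

lemma eq_univ_of_gCofinal {S : SelfSimilar k G Λ} (hcof : GCofinal S) {U : Set (InfPath Λ)}
    (hU : IsOpen U) (hinv : InvariantSet S U) (hne : U.Nonempty) : U = Set.univ := by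
  obtain ⟨z₀, hz₀⟩ := hne
  obtain ⟨n, hn⟩ := isOpen_iff_forall_seg_zero_eq_imp_mem.1 hU z₀ hz₀
  refine Set.eq_univ_of_forall fun y => ?_
  set α := z₀.seg 0 n (le0 n)
  obtain ⟨p, μ, g, hμs, hμr⟩ := hcof y (Λ.s α)
  have hαμ : Λ.s α = Λ.r (S.act g⁻¹ μ) := by
    rw [S.r_act, hμr, ← S.actV_mul, inv_mul_cancel, S.actV_one]
  have hys : Λ.s (y.seg 0 p (le0 p)) = Λ.s μ :=
    Λ.ofObj_injective ((y.seg_self_eq_ofObj_s le_rfl (le0 p)).symm.trans hμs.symm)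
  set ν := Λ.comp α (S.act g⁻¹ μ) hαμ
  set x := S.actInf g⁻¹ (y.shift p)
  have hx : x.seg 0 0 le_rfl = Λ.ofObj (Λ.s ν) := by
    rw [S.actInf_seg_zero, (InfPath.isConcat_shift y p).1, hys, S.act_ofObj_s, Λ.s_comp]
  obtain ⟨z, hz⟩ := InfPath.exists_isConcat hx
  have hαν : Λ.IsPrefix α (z.seg 0 (Λ.d ν) (le0 _)) := by
    rw [hz.2.1]; exact Λ.isPrefix_comp _ _ _
  have hzU : z ∈ U := hn z (z.seg_zero_eq_of_isPrefix hαν (z₀.d_seg_zero n))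
  have hy : IsConcat Λ (y.seg 0 p (le0 p)) (S.actInf g x) y := by
    rw [S.actInf_actInf_inv]; exact InfPath.isConcat_shift y p
  refine hinv g _ ν x z y ?_ hz hy hzU
  rw [hys, Λ.s_comp, S.s_act, ← S.actV_mul, mul_inv_cancel, S.actV_one]

theorem stmt15_general {k : ℕ} (G : Type) [Group G]
    (Λ : KGraph k) (S : SelfSimilar k G Λ) :
    (∀ U : Set (InfPath Λ), IsOpen U → InvariantSet S U → U = ∅ ∨ U = Set.univ) ↔
      GCofinal S := by
  refine ⟨fun H x v => ?_, fun hcof U hU hinv => ?_⟩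
  · rcases H _ (isOpen_cofinalPaths S v) (invariantSet_cofinalPaths S v) with h | h
    · exact absurd h (cofinalPaths_nonempty S v).ne_empty
    · exact Set.eq_univ_iff_forall.1 h x
  · exact U.eq_empty_or_nonempty.imp_right (eq_univ_of_gCofinal hcof hU hinv)

/-- for a pseudo free action, the only open invariant subsets of `Λ^∞` are
`∅` and `Λ^∞` iff `Λ` is `G`-cofinal (minimality of the self-similar path groupoid). -/
theorem stmt15 {k : ℕ} (hk : 0 < k) (G : Type) [Group G] [Countable G]
    (Λ : KGraph k) (S : SelfSimilar k G Λ) (hpf : S.PseudoFree) :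
    (∀ U : Set (InfPath Λ), IsOpen U → InvariantSet S U → U = ∅ ∨ U = Set.univ) ↔
      GCofinal S :=
  stmt15_general G Λ S

end SSKG
end

section
/- Let Λ be a k-graph with a self-similar action of a group G. Then the following two subsets of Λ^∞ × (Q(ℕ^k,G) ⋊_T ℤ^k) × Λ^∞ are equal: (A) the set of all triples (x; [f], p−q; y), where x, y ∈ Λ^∞, f ∈ C(ℕ^k,G) and p, q ∈ ℕ^k satisfy σ^p(x) = f(p)·σ^q(y) and f(p+n) = f(p)|_{σ^q(y)(0,n)} for all n ∈ ℕ^k; and (B) the set {(μ(g·x); T_{d(μ)}([g|_x]), d(μ)−d(ν); νx) : g ∈ G, μ, ν ∈ Λ with s(μ) = g·s(ν), x ∈ s(ν)Λ^∞}. -/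
namespace SSKG

variable {k : ℕ} {G : Type} [Group G] {Λ : KGraph k}

/-!
A triple `(y; [f], p - q; z)` with `σ^p(y) = f(p)·σ^q(z)` lies in `Z(μ, g, ν)` for
`μ = y(0,p)`, `ν = z(0,q)`, `g = f(p)` and `x = σ^q(z)`: then `z = νx`, `y = μ(g·x)`, and the
cocycle condition `f(p + n) = f(p)|_{x(0,n)}` says that `f` agrees with `T_p(g|_x)` beyond `p`.
Conversely, an element of `Z(μ, g, ν)` is such a triple with `f = T_{d(μ)}(g|_x)`,
`p = d(μ)` and `q = d(ν)`, because `g|_x(0) = g`.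
-/

lemma KGraph.ofObj_injective_s18 : Function.Injective Λ.ofObj :=
  Function.LeftInverse.injective Λ.s_ofObj

lemma KGraph.eq_ofObj_r_of_d_eq_zero {μ : Λ.Mor} (h : Λ.d μ = 0) : μ = Λ.ofObj (Λ.r μ) := by
  obtain ⟨v, rfl⟩ := Λ.eq_ofObj_of_d_eq_zero μ h
  rw [Λ.r_ofObj]

lemma KGraph.eq_ofObj_s_of_d_eq_zero_s18 {μ : Λ.Mor} (h : Λ.d μ = 0) : μ = Λ.ofObj (Λ.s μ) := by
  obtain ⟨v, rfl⟩ := Λ.eq_ofObj_of_d_eq_zero μ h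
  rw [Λ.s_ofObj]

namespace InfPath

lemma seg_self (x : InfPath Λ) (q : NK k) :
    x.seg q q le_rfl = Λ.ofObj (Λ.s (x.seg 0 q (le0 q))) := by
  rw [x.src_seg 0 q q (le0 q) le_rfl]
  exact Λ.eq_ofObj_r_of_d_eq_zero (by rw [x.d_seg]; exact tsub_self q)

lemma isConcat_seg_shift (z : InfPath Λ) (q : NK k) :
    IsConcat Λ (z.seg 0 q (le0 q)) (z.shift q) z := by
  refine ⟨?_, z.seg_congr rfl (z.d_seg_zero q) _ _, fun m n h => ?_⟩
  · show z.seg (0 + q) (0 + q) _ = _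
    rw [z.seg_congr (zero_add q) (zero_add q) _ le_rfl, z.seg_self]
  · show _ = z.seg (m + q) (n + q) _
    exact z.seg_congr (by rw [d_seg_zero, add_comm]) (by rw [d_seg_zero, add_comm]) _ _

lemma isConcat_of_shift_eq {y w : InfPath Λ} {p : NK k} (h : y.shift p = w) :
    IsConcat Λ (y.seg 0 p (le0 p)) w y :=
  h ▸ y.isConcat_seg_shift p

end InfPath

lemma IsConcat.shift_eq {μ : Λ.Mor} {x z : InfPath Λ} (h : IsConcat Λ μ x z) :
    z.shift (Λ.d μ) = x := by
  apply InfPath.ext'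
  funext m n hmn
  show z.seg (m + Λ.d μ) (n + Λ.d μ) _ = x.seg m n hmn
  rw [z.seg_congr (add_comm m (Λ.d μ)) (add_comm n (Λ.d μ)) _ (add_le_add_right hmn _), h.2.2]

namespace SelfSimilar

variable (S : SelfSimilar k G Λ)

lemma act_ofObj (g : G) (v : Λ.Obj) : S.act g (Λ.ofObj v) = Λ.ofObj (S.actV g v) :=
  Λ.eq_ofObj_s_of_d_eq_zero_s18 (by rw [S.act_d, Λ.d_ofObj])

lemma resInf_zero (g : G) (x : InfPath Λ) : S.resInf g x 0 = g := by
  rw [resInf, Λ.eq_ofObj_r_of_d_eq_zero (x.d_seg_zero 0), S.res_ofObj]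

lemma actInf_seg_zero_zero (g : G) (x : InfPath Λ) :
    (S.actInf g x).seg 0 0 le_rfl = S.act g (x.seg 0 0 le_rfl) :=
  congrArg (S.act · _) (S.resInf_zero g x)

end SelfSimilar

lemma transFun_toZ_of_le (f : CkG k G) {p m : NK k} (h : p ≤ m) :
    transFun (toZ p) f m = f (m - p) := by
  have hle : ∀ i, p i ≤ m i := Pi.le_def.mp h
  have hc : ∀ i, toZ p i ≤ (m i : ℤ) := fun i => Int.ofNat_le.mpr (hle i)
  rw [transFun, if_pos hc]
  congr 1
  funext i
  have := hle i
  simp only [toZ, Pi.sub_apply]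
  omega

lemma QkG.mk_eq_mk_of_eqOn_Ici {f f' : CkG k G} (z : NK k) (h : Set.EqOn f f' (Set.Ici z)) :
    (QuotientGroup.mk f : QkG k G) = QuotientGroup.mk f' :=
  QuotientGroup.eq.mpr ⟨z, fun m hm => by simp [h hm]⟩

def shiftRelated (S : SelfSimilar k G Λ) : Set (Triple k G Λ) :=
  {t | ∃ (f : CkG k G) (p q : NK k),
    t.2.1.1 = (QuotientGroup.mk f : QkG k G) ∧
    t.2.1.2 = toZ p - toZ q ∧
    t.1.shift p = S.actInf (f p) (t.2.2.shift q) ∧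
    ∀ n : NK k, f (p + n) = S.res (f p) ((t.2.2.shift q).seg 0 n (le0 n))}

lemma shiftRelated_subset_gpd (S : SelfSimilar k G Λ) : shiftRelated S ⊆ Gpd S := by
  rintro ⟨y, ⟨_, _⟩, z⟩ ⟨f, p, q, rfl, rfl, hshift, hres⟩
  have hz := z.isConcat_seg_shift q
  have hy := InfPath.isConcat_of_shift_eq hshift
  have hs : Λ.s (y.seg 0 p (le0 p)) = S.actV (f p) (Λ.s (z.seg 0 q (le0 q))) :=
    Λ.ofObj_injective_s18 <| by rw [← hy.1, S.actInf_seg_zero_zero, hz.1, S.act_ofObj]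
  refine ⟨f p, _, _, hs, _, y, z, hz, hy, ?_⟩
  rw [y.d_seg_zero, z.d_seg_zero, QkG.mk_eq_mk_of_eqOn_Ici p fun m (hm : p ≤ m) => ?_]
  rw [transFun_toZ_of_le _ hm, SelfSimilar.resInf, ← hres, add_tsub_cancel_of_le hm]

lemma gpd_subset_shiftRelated (S : SelfSimilar k G Λ) : Gpd S ⊆ shiftRelated S := by
  rintro _ ⟨g, μ, ν, -, x, y, z, hz, hy, rfl⟩
  have hg : transFun (toZ (Λ.d μ)) (S.resInf g x) (Λ.d μ) = g := by
    rw [transFun_toZ_of_le _ le_rfl, tsub_self, S.resInf_zero]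
  refine ⟨_, Λ.d μ, Λ.d ν, rfl, rfl, ?_, fun n => ?_⟩
  · rw [hg, hy.shift_eq, hz.shift_eq]
  · rw [hg, transFun_toZ_of_le _ le_self_add, add_tsub_cancel_left, hz.shift_eq]
    rfl

theorem stmt18_general {k : ℕ} (G : Type) [Group G]
    (Λ : KGraph k) (S : SelfSimilar k G Λ) :
    {t : Triple k G Λ | ∃ (f : CkG k G) (p q : NK k),
        t.2.1.1 = (QuotientGroup.mk f : QkG k G) ∧
        t.2.1.2 = toZ p - toZ q ∧
        t.1.shift p = S.actInf (f p) (t.2.2.shift q) ∧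
        ∀ n : NK k, f (p + n) = S.res (f p) ((t.2.2.shift q).seg 0 n (le0 n))} =
      Gpd S :=
  (shiftRelated_subset_gpd S).antisymm (gpd_subset_shiftRelated S)

/-- the two descriptions of the self-similar path groupoid coincide. -/
theorem stmt18 {k : ℕ} (hk : 0 < k) (G : Type) [Group G] [Countable G]
    (Λ : KGraph k) (S : SelfSimilar k G Λ) :
    {t : Triple k G Λ | ∃ (f : CkG k G) (p q : NK k),
        t.2.1.1 = (QuotientGroup.mk f : QkG k G) ∧
        t.2.1.2 = toZ p - toZ q ∧
        t.1.shift p = S.actInf (f p) (t.2.2.shift q) ∧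
        ∀ n : NK k, f (p + n) = S.res (f p) ((t.2.2.shift q).seg 0 n (le0 n))} =
      Gpd S :=
  stmt18_general G Λ S

end SSKG
end
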